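/- Let N ≥ 1, g > 0, γ_i > 0 with Σ_i γ_i = 1, H_i > 0 and ũ_i ∈ ℝ for i = 1,…,N, and set h_N = Σ_i γ_i H_i, ũ₋ = min_i ũ_i, ũ₊ = max_i ũ_i. Assume either (1) ũ₊ − ũ₋ < √(g h_N), or (2) max_{1 ≤ i ≤ N−1} |ũ_i − ũ_{i+1}|² < 8 g · min_i(γ_i H_i). Then the real eigenvalues of A_N are exactly { c₋, c₊ } ∪ { c ∈ {ũ₁,…,ũ_N} : #{ j : ũ_j = c } > 1 }, where c₋ ∈ [ũ₋ − √(g h_N), ũ₋) and c₊ ∈ (ũ₊, ũ₊ + √(g h_N)] are the unique eigenvalues of A_N in these intervals. In particular, if the ũ_i are pairwise distinct, then A_N has exactly two real eigenvalues, c₋ and c₊. -/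
import Mathlib


open Matrix

/-- The `2N × 2N` block matrix `A_N = [[diag ũ, diag H], [g·𝟙⊗γ, diag ũ]]` of the
multilayer semi-Lagrangian system. -/
noncomputable def multilayerMatrix (N : ℕ) (g : ℝ) (γ H u : Fin N → ℝ) :
    Matrix (Fin N ⊕ Fin N) (Fin N ⊕ Fin N) ℝ :=
  Matrix.fromBlocks (Matrix.diagonal u) (Matrix.diagonal H)
    (Matrix.of fun _ j => g * γ j) (Matrix.diagonal u)


lemma spec_iff_det {N : ℕ} (M : Matrix (Fin N ⊕ Fin N) (Fin N ⊕ Fin N) ℝ) (c : ℝ) :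
    (c : ℂ) ∈ spectrum ℂ (M.map (fun x : ℝ => (x : ℂ))) ↔ (c • 1 - M).det = 0 := by
  rw [spectrum.mem_iff, Matrix.isUnit_iff_isUnit_det]
  have h1 : (algebraMap ℂ (Matrix (Fin N ⊕ Fin N) (Fin N ⊕ Fin N) ℂ)) (c:ℂ) - M.map (fun x : ℝ => (x : ℂ))
      = ((Complex.ofRealHom : ℝ →+* ℂ).mapMatrix (c • 1 - M)) := by
    ext i j
    simp only [Algebra.algebraMap_eq_smul_one, Matrix.sub_apply, Matrix.smul_apply,
      Matrix.one_apply, RingHom.mapMatrix_apply, Matrix.map_apply, Complex.ofRealHom_eq_coe]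
    push_cast
    split <;> simp
  rw [h1, ← RingHom.map_det]
  simp [isUnit_iff_ne_zero]


lemma block_decomp {N : ℕ} (g c : ℝ) (γ H u : Fin N → ℝ) :
    c • (1 : Matrix (Fin N ⊕ Fin N) (Fin N ⊕ Fin N) ℝ) - multilayerMatrix N g γ H u
      = Matrix.fromBlocks (Matrix.diagonal fun i => c - u i) (Matrix.diagonal fun i => -H i)
          (Matrix.of fun _ j => -(g * γ j)) (Matrix.diagonal fun i => c - u i) := by
  ext i j
  rcases i with i | i <;> rcases j with j | j <;>
    simp [multilayerMatrix, Matrix.one_apply, Matrix.diagonal, Matrix.fromBlocks] <;>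
    split <;> simp_all

lemma sum_aux {N : ℕ} (g : ℝ) (γ x : Fin N → ℝ) :
    ∑ j, g * γ j * x j = g * ∑ j, γ j * x j := by
  rw [Finset.mul_sum]; exact Finset.sum_congr rfl fun j _ => by ring

lemma kernel_iff {N : ℕ} (g c : ℝ) (γ H u : Fin N → ℝ) :
    ((c • (1 : Matrix (Fin N ⊕ Fin N) (Fin N ⊕ Fin N) ℝ) - multilayerMatrix N g γ H u).det = 0)
    ↔ ∃ x y : Fin N → ℝ, (x ≠ 0 ∨ y ≠ 0) ∧
        (∀ i, (c - u i) * x i = H i * y i) ∧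
        (∀ i, (c - u i) * y i = g * ∑ j, γ j * x j) := by
  rw [← Matrix.exists_mulVec_eq_zero_iff, block_decomp]
  constructor
  · rintro ⟨v, hv, hv0⟩
    refine ⟨v ∘ Sum.inl, v ∘ Sum.inr, ?_, ?_, ?_⟩
    · by_contra h
      push_neg at h
      apply hv
      funext k
      rcases k with k | k
      · exact congrFun h.1 k
      · exact congrFun h.2 k
    · intro i
      have h1 := congrFun hv0 (Sum.inl i)
      simp [Matrix.mulVec, dotProduct, Fintype.sum_sum_type, Matrix.fromBlocks,
        Matrix.diagonal_apply, Finset.sum_ite_eq, Finset.sum_ite_eq'] at h1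
      simp only [Function.comp_apply]
      linarith
    · intro i
      have h2 := congrFun hv0 (Sum.inr i)
      simp [Matrix.mulVec, dotProduct, Fintype.sum_sum_type, Matrix.fromBlocks,
        Matrix.diagonal_apply, Finset.sum_ite_eq, Finset.sum_ite_eq'] at h2
      rw [← sum_aux g γ (v ∘ Sum.inl)]
      simp only [Function.comp_apply]
      linarith
  · rintro ⟨x, y, hxy, h1, h2⟩
    refine ⟨Sum.elim x y, ?_, ?_⟩
    · intro h
      rcases hxy with hx | hy
      · exact hx (funext fun i => congrFun h (Sum.inl i))
      · exact hy (funext fun i => congrFun h (Sum.inr i))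
    · funext k
      rcases k with k | k <;>
        simp [Matrix.mulVec, dotProduct, Fintype.sum_sum_type, Matrix.fromBlocks,
          Matrix.diagonal_apply, Finset.sum_ite_eq, Finset.sum_ite_eq']
      · linarith [h1 k]
      · have := h2 k
        rw [← sum_aux g γ x] at this
        linarith


noncomputable def Fc {N : ℕ} (g : ℝ) (γ H u : Fin N → ℝ) (c : ℝ) : ℝ :=
  ∑ j, g * (γ j * H j) / (c - u j) ^ 2

lemma char_iff {N : ℕ} (hN : 1 ≤ N) (g : ℝ) (hg : 0 < g) (γ H u : Fin N → ℝ)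
    (hγ : ∀ i, 0 < γ i) (hH : ∀ i, 0 < H i) (c : ℝ) :
    (∃ x y : Fin N → ℝ, (x ≠ 0 ∨ y ≠ 0) ∧
        (∀ i, (c - u i) * x i = H i * y i) ∧
        (∀ i, (c - u i) * y i = g * ∑ j, γ j * x j))
    ↔ ((∀ i, u i ≠ c) ∧ Fc g γ H u c = 1) ∨ (∃ i j, i ≠ j ∧ u i = c ∧ u j = c) := by
  constructor
  · rintro ⟨x, y, hxy, h1, h2⟩
    by_cases h : ∀ i, u i ≠ c
    · left
      refine ⟨h, ?_⟩
      set S := ∑ j, γ j * x j with hS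
      have hne : ∀ i, c - u i ≠ 0 := fun i => sub_ne_zero.2 fun e => h i e.symm
      have hy : ∀ i, y i = g * S / (c - u i) := by
        intro i
        rw [eq_div_iff (hne i)]
        linarith [h2 i]
      have hx : ∀ i, x i = g * S * H i / (c - u i) ^ 2 := by
        intro i
        have e0 : x i = H i * y i / (c - u i) := by
          rw [eq_div_iff (hne i)]
          linarith [h1 i]
        rw [e0, hy i]
        field_simp
      have hSne : S ≠ 0 := by
        intro hS0
        rcases hxy with hx0 | hy0
        · exact hx0 (funext fun i => by rw [hx i, hS0]; simp)
        · exact hy0 (funext fun i => by rw [hy i, hS0]; simp)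
      have hkey : S = S * Fc g γ H u c := by
        conv_lhs => rw [hS]
        rw [Fc, Finset.mul_sum]
        refine Finset.sum_congr rfl fun j _ => ?_
        rw [hx j]
        field_simp
      have := mul_left_cancel₀ hSne (by rw [← hkey, mul_one] : S * 1 = S * Fc g γ H u c)
      exact this.symm
    · right
      push_neg at h
      obtain ⟨j, hj⟩ := h
      by_contra hcon
      push_neg at hcon
      have hmult : ∀ k, k ≠ j → u k ≠ c := by
        intro k hk hkc
        exact (hcon k j hk hkc hj).elim
      have hS0 : (∑ j, γ j * x j) = 0 := by
        have := h2 j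
        rw [hj] at this
        simp at this
        rcases this with h | h
        · exact absurd h (ne_of_gt hg)
        · exact h
      have hyk : ∀ k, y k = 0 := by
        intro k
        by_cases hk : k = j
        · subst hk
          have := h1 k
          rw [hj] at this
          simp at this
          rcases this with h | h
          · exact absurd h (ne_of_gt (hH k))
          · exact h
        · have hne : c - u k ≠ 0 := sub_ne_zero.2 fun e => hmult k hk e.symm
          have := h2 k
          rw [hS0, mul_zero] at this
          exact (mul_eq_zero.1 this).resolve_left hne
      have hxk : ∀ k, x k = 0 := by
        intro k
        by_cases hk : k = j
        · subst hk
          have hsum : (∑ i, γ i * x i) = γ k * x k := by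
            refine Finset.sum_eq_single k (fun b _ hb => ?_) (by simp)
            have hne : c - u b ≠ 0 := sub_ne_zero.2 fun e => hmult b hb e.symm
            have := h1 b
            rw [hyk b, mul_zero] at this
            rw [(mul_eq_zero.1 this).resolve_left hne, mul_zero]
          rw [hS0] at hsum
          rcases mul_eq_zero.1 hsum.symm with h | h
          · exact absurd h (ne_of_gt (hγ k))
          · exact h
        · have hne : c - u k ≠ 0 := sub_ne_zero.2 fun e => hmult k hk e.symm
          have := h1 k
          rw [hyk k, mul_zero] at this
          exact (mul_eq_zero.1 this).resolve_left hne
      rcases hxy with hx0 | hy0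
      · exact hx0 (funext hxk)
      · exact hy0 (funext hyk)
  · rintro (⟨h, hF⟩ | ⟨i, j, hij, hi, hj⟩)
    · have hne : ∀ i, c - u i ≠ 0 := fun i => sub_ne_zero.2 fun e => h i e.symm
      have hsum : (∑ j, γ j * (g * H j / (c - u j) ^ 2)) = Fc g γ H u c := by
        rw [Fc]
        exact Finset.sum_congr rfl fun j _ => by ring
      refine ⟨fun i => g * H i / (c - u i) ^ 2, fun i => g / (c - u i), ?_, ?_, ?_⟩
      · left
        intro h0
        have i0 : Fin N := ⟨0, hN⟩
        have hz := congrFun h0 i0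
        simp only [Pi.zero_apply] at hz
        have hsq : 0 < (c - u i0) ^ 2 :=
          lt_of_le_of_ne (sq_nonneg _) (Ne.symm (pow_ne_zero 2 (hne i0)))
        have hpos : 0 < g * H i0 / (c - u i0) ^ 2 := div_pos (mul_pos hg (hH i0)) hsq
        rw [hz] at hpos
        exact lt_irrefl 0 hpos
      · intro i
        field_simp [hne i]
      · intro i
        rw [hsum, hF, mul_one]
        field_simp [hne i]
    · refine ⟨fun k => (if k = i then γ j else 0) + (if k = j then -(γ i) else 0), 0, ?_, ?_, ?_⟩
      · left
        intro h0
        have := congrFun h0 i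
        simp [hij] at this
        exact absurd this (ne_of_gt (hγ j))
      · intro k
        simp only [Pi.zero_apply, mul_zero]
        by_cases hk : k = i
        · subst hk; rw [hi]; ring
        · by_cases hk' : k = j
          · subst hk'; rw [hj]; ring
          · simp [hk, hk']
      · intro k
        have hS : (∑ l, γ l * ((if l = i then γ j else 0) + (if l = j then -(γ i) else 0))) = 0 := by
          have : ∀ l, γ l * ((if l = i then γ j else 0) + (if l = j then -(γ i) else 0))
              = (if l = i then γ i * γ j else 0) + (if l = j then -(γ j * γ i) else 0) := by
            intro l
            by_cases h1 : l = i <;> by_cases h2 : l = j <;> simp [h1, h2, hij, hij.symm] <;> ring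
          rw [Finset.sum_congr rfl fun l _ => this l, Finset.sum_add_distrib]
          simp [Finset.sum_ite_eq', mul_comm]
        simp only [Pi.zero_apply, mul_zero, hS]


section analytic
variable {N : ℕ} {g : ℝ} {γ H u : Fin N → ℝ} {hN' : ℝ}

lemma Fc_term_nonneg (hg : 0 < g) (hγ : ∀ i, 0 < γ i) (hH : ∀ i, 0 < H i) (c : ℝ) (j : Fin N) :
    0 ≤ g * (γ j * H j) / (c - u j) ^ 2 :=
  div_nonneg (mul_pos hg (mul_pos (hγ j) (hH j))).le (sq_nonneg _)

lemma Fc_sum_const (hhN : hN' = ∑ i, γ i * H i) :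
    (∑ j, g * (γ j * H j) / (g * hN')) = g * hN' / (g * hN') := by
  rw [← Finset.sum_div, hhN, Finset.mul_sum]

lemma Fc_le_one (hg : 0 < g) (hγ : ∀ i, 0 < γ i) (hH : ∀ i, 0 < H i)
    (hhN : hN' = ∑ i, γ i * H i) (hgh : 0 < g * hN') (c : ℝ)
    (hfar : ∀ j, g * hN' ≤ (c - u j) ^ 2) : Fc g γ H u c ≤ 1 := by
  have h1 : Fc g γ H u c ≤ ∑ j, g * (γ j * H j) / (g * hN') := by
    refine Finset.sum_le_sum fun j _ => ?_
    exact div_le_div_of_nonneg_left (mul_pos hg (mul_pos (hγ j) (hH j))).le hgh (hfar j)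
  rw [Fc_sum_const hhN, div_self (ne_of_gt hgh)] at h1
  exact h1

lemma Fc_lt_one [Nonempty (Fin N)] (hg : 0 < g) (hγ : ∀ i, 0 < γ i) (hH : ∀ i, 0 < H i)
    (hhN : hN' = ∑ i, γ i * H i) (hgh : 0 < g * hN') (c : ℝ)
    (hfar : ∀ j, g * hN' < (c - u j) ^ 2) : Fc g γ H u c < 1 := by
  have h1 : Fc g γ H u c < ∑ j, g * (γ j * H j) / (g * hN') := by
    refine Finset.sum_lt_sum_of_nonempty Finset.univ_nonempty fun j _ => ?_
    exact div_lt_div_of_pos_left (mul_pos hg (mul_pos (hγ j) (hH j))) hgh (hfar j)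
  rwa [Fc_sum_const hhN, div_self (ne_of_gt hgh)] at h1

lemma Fc_gt_one [Nonempty (Fin N)] (hg : 0 < g) (hγ : ∀ i, 0 < γ i) (hH : ∀ i, 0 < H i)
    (hhN : hN' = ∑ i, γ i * H i) (hgh : 0 < g * hN') (c : ℝ)
    (hnear : ∀ j, (c - u j) ^ 2 < g * hN') (hne : ∀ j, c - u j ≠ 0) : 1 < Fc g γ H u c := by
  have h1 : (∑ j, g * (γ j * H j) / (g * hN')) < Fc g γ H u c := by
    refine Finset.sum_lt_sum_of_nonempty Finset.univ_nonempty fun j _ => ?_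
    refine div_lt_div_of_pos_left (mul_pos hg (mul_pos (hγ j) (hH j))) ?_ (hnear j)
    exact lt_of_le_of_ne (sq_nonneg _) (Ne.symm (pow_ne_zero 2 (hne j)))
  rwa [Fc_sum_const hhN, div_self (ne_of_gt hgh)] at h1

lemma Fc_strictMonoOn [Nonempty (Fin N)] (hg : 0 < g) (hγ : ∀ i, 0 < γ i) (hH : ∀ i, 0 < H i)
    {um : ℝ} (hlb : ∀ i, um ≤ u i) : StrictMonoOn (Fc g γ H u) (Set.Iio um) := by
  intro a ha b hb hab
  refine Finset.sum_lt_sum_of_nonempty Finset.univ_nonempty fun j _ => ?_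
  refine div_lt_div_of_pos_left (mul_pos hg (mul_pos (hγ j) (hH j))) ?_ ?_
  · have := hlb j; have := hb.out; nlinarith
  · have := hlb j; have := hb.out; nlinarith

lemma Fc_strictAntiOn [Nonempty (Fin N)] (hg : 0 < g) (hγ : ∀ i, 0 < γ i) (hH : ∀ i, 0 < H i)
    {up : ℝ} (hub : ∀ i, u i ≤ up) : StrictAntiOn (Fc g γ H u) (Set.Ioi up) := by
  intro a ha b hb hab
  refine Finset.sum_lt_sum_of_nonempty Finset.univ_nonempty fun j _ => ?_
  refine div_lt_div_of_pos_left (mul_pos hg (mul_pos (hγ j) (hH j))) ?_ ?_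
  · have := hub j; have := ha.out; nlinarith
  · have := hub j; have := ha.out; nlinarith

lemma Fc_continuousOn (g : ℝ) (γ H u : Fin N → ℝ) :
    ContinuousOn (Fc g γ H u) {c : ℝ | ∀ j, c ≠ u j} := by
  refine continuousOn_finset_sum _ fun j _ => ContinuousOn.div continuousOn_const ?_ ?_
  · exact (continuousOn_id.sub continuousOn_const).pow 2
  · exact fun x hx => pow_ne_zero 2 (sub_ne_zero.2 (hx j))

lemma straddle (u : Fin N → ℝ) (c : ℝ) (hne : ∀ k, u k ≠ c) (a b : Fin N)
    (ha : u a < c) (hb : c < u b) :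
    ∃ i j : Fin N, (j : ℕ) = (i : ℕ) + 1 ∧ (u i - c) * (u j - c) < 0 := by
  by_contra hcon
  push_neg at hcon
  have h0 : 0 < N := lt_of_le_of_lt (Nat.zero_le _) a.isLt
  have step : ∀ n (hn : n + 1 < N),
      (u ⟨n, Nat.lt_of_succ_lt hn⟩ < c ↔ u ⟨n + 1, hn⟩ < c) := by
    intro n hn
    have hp := hcon ⟨n, Nat.lt_of_succ_lt hn⟩ ⟨n + 1, hn⟩ rfl
    have h1 := hne ⟨n, Nat.lt_of_succ_lt hn⟩
    have h2 := hne ⟨n + 1, hn⟩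
    constructor
    · intro h
      rcases lt_or_gt_of_ne h2 with h' | h'
      · exact h'
      · nlinarith
    · intro h
      rcases lt_or_gt_of_ne h1 with h' | h'
      · exact h'
      · nlinarith
  have all : ∀ n (hn : n < N), (u ⟨n, hn⟩ < c ↔ u ⟨0, h0⟩ < c) := by
    intro n
    induction n with
    | zero => intro hn; rfl
    | succ m ih => intro hn; rw [← step m hn]; exact ih (Nat.lt_of_succ_lt hn)
  have hA := (all a.1 a.2).1 (by simpa using ha)
  have hB := (all b.1 b.2)
  rw [hB] at *
  have : u b < c := by
    have := (all b.1 b.2).2 hA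
    simpa using this
  linarith

lemma pair_bound {a b P Q : ℝ} (hab : a * b < 0) (hP : (a - b) ^ 2 < 8 * P)
    (hQ : (a - b) ^ 2 < 8 * Q) : 1 < P / a ^ 2 + Q / b ^ 2 := by
  have ha : a ≠ 0 := fun h => by simp [h] at hab
  have hb : b ≠ 0 := fun h => by simp [h] at hab
  have ha2 : 0 < a ^ 2 := lt_of_le_of_ne (sq_nonneg _) (Ne.symm (pow_ne_zero 2 ha))
  have hb2 : 0 < b ^ 2 := lt_of_le_of_ne (sq_nonneg _) (Ne.symm (pow_ne_zero 2 hb))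
  have key : 1 ≤ (a - b) ^ 2 / (8 * a ^ 2) + (a - b) ^ 2 / (8 * b ^ 2) := by
    rw [div_add_div _ _ (by positivity) (by positivity), le_div_iff₀ (by positivity)]
    nlinarith [sq_nonneg (a + b), sq_nonneg (a ^ 2 - b ^ 2)]
  have h1 : (a - b) ^ 2 / (8 * a ^ 2) < P / a ^ 2 := by
    rw [div_lt_div_iff₀ (by positivity) ha2]
    nlinarith
  have h2 : (a - b) ^ 2 / (8 * b ^ 2) < Q / b ^ 2 := by
    rw [div_lt_div_iff₀ (by positivity) hb2]
    nlinarith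
  linarith

end analytic

lemma spec_iff {N : ℕ} (hN : 1 ≤ N) (g : ℝ) (hg : 0 < g) (γ H u : Fin N → ℝ)
    (hγ : ∀ i, 0 < γ i) (hH : ∀ i, 0 < H i) (c : ℝ) :
    (c : ℂ) ∈ spectrum ℂ ((multilayerMatrix N g γ H u).map (fun x : ℝ => (x : ℂ)))
    ↔ ((∀ i, u i ≠ c) ∧ Fc g γ H u c = 1) ∨ (∃ i j, i ≠ j ∧ u i = c ∧ u j = c) := by
  rw [spec_iff_det, kernel_iff, char_iff hN g hg γ H u hγ hH c]

set_option maxHeartbeats 2000000 in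
/-- If either `ũ₊ - ũ₋ < √(g h_N)` or
`max_i |ũᵢ - ũᵢ₊₁|² < 8 g minᵢ(γᵢ Hᵢ)`, then the real eigenvalues of `A_N` are exactly
`{c₋, c₊}` together with the values attained by more than one `ũ_j`, where `c₋`, `c₊` are
the unique eigenvalues in `[ũ₋ - √(g h_N), ũ₋)` and `(ũ₊, ũ₊ + √(g h_N)]`; if the `ũᵢ`
are pairwise distinct, the real eigenvalues are exactly `c₋` and `c₊`. -/
theorem stmt17 (N : ℕ) (hN : 1 ≤ N) (g : ℝ) (hg : 0 < g)
    (γ H u : Fin N → ℝ) (hγ : ∀ i, 0 < γ i) (hγsum : ∑ i, γ i = 1)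
    (hH : ∀ i, 0 < H i)
    (hN' um up : ℝ)
    (hhN : hN' = ∑ i, γ i * H i)
    (hum : IsLeast (Set.range u) um) (hup : IsGreatest (Set.range u) up)
    (hcond :
      up - um < Real.sqrt (g * hN') ∨
      (∀ i j : Fin N, (j : ℕ) = (i : ℕ) + 1 → ∀ k : Fin N,
        |u i - u j| ^ 2 < 8 * g * (γ k * H k))) :
    ∃ cm cp : ℝ,
      cm ∈ Set.Ico (um - Real.sqrt (g * hN')) um ∧
      cp ∈ Set.Ioc up (up + Real.sqrt (g * hN')) ∧
      (cm : ℂ) ∈ spectrum ℂ ((multilayerMatrix N g γ H u).map (fun x : ℝ => (x : ℂ))) ∧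
      (cp : ℂ) ∈ spectrum ℂ ((multilayerMatrix N g γ H u).map (fun x : ℝ => (x : ℂ))) ∧
      (∀ c : ℝ, c ∈ Set.Ico (um - Real.sqrt (g * hN')) um →
        (c : ℂ) ∈ spectrum ℂ ((multilayerMatrix N g γ H u).map (fun x : ℝ => (x : ℂ))) →
        c = cm) ∧
      (∀ c : ℝ, c ∈ Set.Ioc up (up + Real.sqrt (g * hN')) →
        (c : ℂ) ∈ spectrum ℂ ((multilayerMatrix N g γ H u).map (fun x : ℝ => (x : ℂ))) →
        c = cp) ∧
      {c : ℝ | (c : ℂ) ∈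
          spectrum ℂ ((multilayerMatrix N g γ H u).map (fun x : ℝ => (x : ℂ)))} =
        {cm, cp} ∪ {c : ℝ | 1 < (Finset.univ.filter (fun j => u j = c)).card} ∧
      (Function.Injective u →
        {c : ℝ | (c : ℂ) ∈
            spectrum ℂ ((multilayerMatrix N g γ H u).map (fun x : ℝ => (x : ℂ)))} =
          {cm, cp}) := by
  have inst : Nonempty (Fin N) := ⟨⟨0, hN⟩⟩
  obtain ⟨j0, hj0⟩ := hum.1
  obtain ⟨j1, hj1⟩ := hup.1
  have hlb : ∀ i, um ≤ u i := fun i => hum.2 ⟨i, rfl⟩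
  have hub : ∀ i, u i ≤ up := fun i => hup.2 ⟨i, rfl⟩
  have hN'pos : 0 < hN' := by
    rw [hhN]; exact Finset.sum_pos (fun i _ => mul_pos (hγ i) (hH i)) Finset.univ_nonempty
  have hgh : 0 < g * hN' := mul_pos hg hN'pos
  set s := Real.sqrt (g * hN') with hsdef
  have hs : 0 < s := Real.sqrt_pos.2 hgh
  have hs2 : s ^ 2 = g * hN' := Real.sq_sqrt hgh.le
  have hspec := fun c : ℝ => spec_iff hN g hg γ H u hγ hH c
  -- existence of cm
  set t0 := Real.sqrt (g * (γ j0 * H j0)) with ht0def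
  have ht0 : 0 < t0 := Real.sqrt_pos.2 (mul_pos hg (mul_pos (hγ j0) (hH j0)))
  have ht02 : t0 ^ 2 = g * (γ j0 * H j0) := Real.sq_sqrt (mul_pos hg (mul_pos (hγ j0) (hH j0))).le
  set ε := min s t0 / 2 with hεdef
  have hε : 0 < ε := by
    have := lt_min hs ht0
    rw [hεdef]; linarith
  have hεs : ε < s := by have := min_le_left s t0; rw [hεdef]; linarith
  have hεt : ε < t0 := by have := min_le_right s t0; rw [hεdef]; linarith
  have F1 : Fc g γ H u (um - s) ≤ 1 := by
    refine Fc_le_one hg hγ hH hhN hgh _ fun j => ?_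
    rw [← hs2]
    nlinarith [hlb j, hs.le]
  have F2 : 1 < Fc g γ H u (um - ε) := by
    have hden : (um - ε - u j0) ^ 2 = ε ^ 2 := by rw [hj0]; ring
    have hterm : g * (γ j0 * H j0) / ((um - ε) - u j0) ^ 2 = t0 ^ 2 / ε ^ 2 := by
      rw [ht02, hden]
    have h1 : 1 < t0 ^ 2 / ε ^ 2 := by
      rw [lt_div_iff₀ (pow_pos hε 2), one_mul]
      nlinarith [hεt, hε, ht0]
    have h2 : g * (γ j0 * H j0) / ((um - ε) - u j0) ^ 2 ≤ Fc g γ H u (um - ε) :=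
      Finset.single_le_sum (fun j _ => Fc_term_nonneg hg hγ hH _ j) (Finset.mem_univ j0)
    rw [hterm] at h2
    linarith
  have hcont : ContinuousOn (Fc g γ H u) (Set.Icc (um - s) (um - ε)) := by
    refine (Fc_continuousOn g γ H u).mono fun c hc j => ?_
    have h1 := hlb j
    have h2 := hc.2
    exact ne_of_lt (by linarith)
  have hIccle : um - s ≤ um - ε := by linarith
  obtain ⟨cm, hcmIcc, hcmF⟩ := intermediate_value_Icc hIccle hcont ⟨F1, F2.le⟩
  have hcmlt : cm < um := lt_of_le_of_lt hcmIcc.2 (by linarith)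
  have hcmIco : cm ∈ Set.Ico (um - s) um := ⟨hcmIcc.1, hcmlt⟩
  have hcm_ne : ∀ i, u i ≠ cm := fun i h => absurd (h ▸ hlb i) (not_le.2 hcmlt)
  have hcm_spec : (cm : ℂ) ∈ spectrum ℂ ((multilayerMatrix N g γ H u).map (fun x : ℝ => (x : ℂ))) :=
    (hspec cm).2 (Or.inl ⟨hcm_ne, hcmF⟩)
  -- existence of cp
  set t1 := Real.sqrt (g * (γ j1 * H j1)) with ht1def
  have ht1 : 0 < t1 := Real.sqrt_pos.2 (mul_pos hg (mul_pos (hγ j1) (hH j1)))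
  have ht12 : t1 ^ 2 = g * (γ j1 * H j1) := Real.sq_sqrt (mul_pos hg (mul_pos (hγ j1) (hH j1))).le
  set ε' := min s t1 / 2 with hε'def
  have hε' : 0 < ε' := by
    have := lt_min hs ht1
    rw [hε'def]; linarith
  have hε's : ε' < s := by have := min_le_left s t1; rw [hε'def]; linarith
  have hε't : ε' < t1 := by have := min_le_right s t1; rw [hε'def]; linarith
  have F1' : Fc g γ H u (up + s) ≤ 1 := by
    refine Fc_le_one hg hγ hH hhN hgh _ fun j => ?_
    rw [← hs2]
    nlinarith [hub j, hs.le]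
  have F2' : 1 < Fc g γ H u (up + ε') := by
    have hden : (up + ε' - u j1) ^ 2 = ε' ^ 2 := by rw [hj1]; ring
    have hterm : g * (γ j1 * H j1) / ((up + ε') - u j1) ^ 2 = t1 ^ 2 / ε' ^ 2 := by
      rw [ht12, hden]
    have h1 : 1 < t1 ^ 2 / ε' ^ 2 := by
      rw [lt_div_iff₀ (pow_pos hε' 2), one_mul]
      nlinarith [hε't, hε', ht1]
    have h2 : g * (γ j1 * H j1) / ((up + ε') - u j1) ^ 2 ≤ Fc g γ H u (up + ε') :=
      Finset.single_le_sum (fun j _ => Fc_term_nonneg hg hγ hH _ j) (Finset.mem_univ j1)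
    rw [hterm] at h2
    linarith
  have hcont' : ContinuousOn (Fc g γ H u) (Set.Icc (up + ε') (up + s)) := by
    refine (Fc_continuousOn g γ H u).mono fun c hc j => ?_
    have h1 := hub j
    have h2 := hc.1
    exact fun e => by rw [e] at h2; linarith
  have hIccle' : up + ε' ≤ up + s := by linarith
  obtain ⟨cp, hcpIcc, hcpF⟩ := intermediate_value_Icc' hIccle' hcont' ⟨F1', F2'.le⟩
  have hcpgt : up < cp := lt_of_lt_of_le (by linarith) hcpIcc.1
  have hcpIoc : cp ∈ Set.Ioc up (up + s) := ⟨hcpgt, hcpIcc.2⟩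
  have hcp_ne : ∀ i, u i ≠ cp := fun i h => absurd (h ▸ hub i) (not_le.2 hcpgt)
  have hcp_spec : (cp : ℂ) ∈ spectrum ℂ ((multilayerMatrix N g γ H u).map (fun x : ℝ => (x : ℂ))) :=
    (hspec cp).2 (Or.inl ⟨hcp_ne, hcpF⟩)
  -- uniqueness
  have hmono := Fc_strictMonoOn (u := u) hg hγ hH hlb
  have hanti := Fc_strictAntiOn (u := u) hg hγ hH hub
  have uniq_m : ∀ c : ℝ, c ∈ Set.Ico (um - s) um →
      (c : ℂ) ∈ spectrum ℂ ((multilayerMatrix N g γ H u).map (fun x : ℝ => (x : ℂ))) → c = cm := by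
    intro c hc hcs
    rw [hspec c] at hcs
    have hclt : c < um := hc.2
    have hne : ∀ i, u i ≠ c := fun i h => absurd (h ▸ hlb i) (not_le.2 hclt)
    rcases hcs with ⟨_, hF⟩ | ⟨i, j, hij, hi, hj⟩
    · exact hmono.injOn (Set.mem_Iio.2 hclt) (Set.mem_Iio.2 hcmlt) (hF.trans hcmF.symm)
    · exact absurd hi (hne i)
  have uniq_p : ∀ c : ℝ, c ∈ Set.Ioc up (up + s) →
      (c : ℂ) ∈ spectrum ℂ ((multilayerMatrix N g γ H u).map (fun x : ℝ => (x : ℂ))) → c = cp := by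
    intro c hc hcs
    rw [hspec c] at hcs
    have hcgt : up < c := hc.1
    have hne : ∀ i, u i ≠ c := fun i h => absurd (h ▸ hub i) (not_le.2 hcgt)
    rcases hcs with ⟨_, hF⟩ | ⟨i, j, hij, hi, hj⟩
    · exact hanti.injOn (Set.mem_Ioi.2 hcgt) (Set.mem_Ioi.2 hcpgt) (hF.trans hcpF.symm)
    · exact absurd hi (hne i)
  -- interior bound
  have hinterior : ∀ c : ℝ, um ≤ c → c ≤ up → (∀ i, u i ≠ c) → 1 < Fc g γ H u c := by
    intro c hc1 hc2 hne
    have hnez : ∀ j, c - u j ≠ 0 := fun j => sub_ne_zero.2 fun e => hne j e.symm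
    rcases hcond with h1 | h2
    · refine Fc_gt_one hg hγ hH hhN hgh c (fun j => ?_) hnez
      have hj1' := hlb j
      have hj2' := hub j
      have habs : (c - u j) ^ 2 ≤ (up - um) ^ 2 := by
        nlinarith [mul_nonneg (add_nonneg (sub_nonneg.2 hc2) (sub_nonneg.2 hj1'))
          (add_nonneg (sub_nonneg.2 hc1) (sub_nonneg.2 hj2'))]
      have hlt : (up - um) ^ 2 < g * hN' := by
        rw [← hs2]
        nlinarith [sub_nonneg.2 (le_trans hc1 hc2), hs.le]
      linarith
    · have ha : u j0 < c := by
        have h' : u j0 ≤ c := by rw [hj0]; exact hc1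
        exact lt_of_le_of_ne h' (hne j0)
      have hb : c < u j1 := by
        have h' : c ≤ u j1 := by rw [hj1]; exact hc2
        exact lt_of_le_of_ne h' (fun e => hne j1 e.symm)
      obtain ⟨i, j, hadj, hprod⟩ := straddle u c hne j0 j1 ha hb
      have hij : i ≠ j := by
        intro e
        rw [e] at hprod
        nlinarith [sq_nonneg (u j - c)]
      have hsum2 : g * (γ i * H i) / (c - u i) ^ 2 + g * (γ j * H j) / (c - u j) ^ 2
          ≤ Fc g γ H u c := by
        rw [← Finset.sum_pair (f := fun k => g * (γ k * H k) / (c - u k) ^ 2) hij]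
        exact Finset.sum_le_sum_of_subset_of_nonneg (Finset.subset_univ _)
          (fun k _ _ => Fc_term_nonneg hg hγ hH c k)
      have hPi := h2 i j hadj i
      have hPj := h2 i j hadj j
      have hab : (c - u i) * (c - u j) < 0 := by nlinarith
      have he : ((c - u i) - (c - u j)) ^ 2 = |u i - u j| ^ 2 := by rw [sq_abs]; ring
      have hP : ((c - u i) - (c - u j)) ^ 2 < 8 * (g * (γ i * H i)) := by
        rw [he]; linarith
      have hQ : ((c - u i) - (c - u j)) ^ 2 < 8 * (g * (γ j * H j)) := by
        rw [he]; linarith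
      have := pair_bound hab hP hQ
      linarith
  -- set equality
  have hEq : {c : ℝ | (c : ℂ) ∈ spectrum ℂ ((multilayerMatrix N g γ H u).map (fun x : ℝ => (x : ℂ)))}
      = {cm, cp} ∪ {c : ℝ | 1 < (Finset.univ.filter (fun j => u j = c)).card} := by
    ext c
    simp only [Set.mem_setOf_eq, Set.mem_union, Set.mem_insert_iff, Set.mem_singleton_iff]
    constructor
    · intro hc0
      have hc := (hspec c).1 hc0
      rcases hc with ⟨hne, hF⟩ | ⟨i, j, hij, hi, hj⟩
      · left
        rcases lt_trichotomy c um with hlt | heq | hgt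
        · left
          rcases lt_or_ge c (um - s) with h' | h'
          · exfalso
            have hflt : Fc g γ H u c < 1 := by
              refine Fc_lt_one hg hγ hH hhN hgh c fun j => ?_
              rw [← hs2]
              nlinarith [hlb j, hs]
            linarith
          · exact uniq_m c ⟨h', hlt⟩ hc0
        · exact absurd (hj0.trans heq.symm) (hne j0)
        · right
          rcases le_or_gt c up with h' | h'
          · exfalso
            have := hinterior c hgt.le h' hne
            rw [hF] at this
            exact lt_irrefl 1 this
          · rcases le_or_gt c (up + s) with h'' | h''
            · exact uniq_p c ⟨h', h''⟩ hc0
            · exfalso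
              have hflt : Fc g γ H u c < 1 := by
                refine Fc_lt_one hg hγ hH hhN hgh c fun j => ?_
                rw [← hs2]
                nlinarith [hub j, hs]
              linarith
      · right
        exact Finset.one_lt_card.2 ⟨i, Finset.mem_filter.2 ⟨Finset.mem_univ _, hi⟩,
          j, Finset.mem_filter.2 ⟨Finset.mem_univ _, hj⟩, hij⟩
    · rintro ((rfl | rfl) | hmul)
      · exact hcm_spec
      · exact hcp_spec
      · obtain ⟨i, hi, j, hj, hij⟩ := Finset.one_lt_card.1 hmul
        simp only [Finset.mem_filter] at hi hj
        exact (hspec c).2 (Or.inr ⟨i, j, hij, hi.2, hj.2⟩)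
  refine ⟨cm, cp, hcmIco, hcpIoc, hcm_spec, hcp_spec, uniq_m, uniq_p, hEq, ?_⟩
  intro hinj
  rw [hEq]
  have hempty : {c : ℝ | 1 < (Finset.univ.filter (fun j => u j = c)).card} = ∅ := by
    ext c
    simp only [Set.mem_setOf_eq, Set.mem_empty_iff_false, iff_false, not_lt]
    by_contra hcc
    push_neg at hcc
    obtain ⟨i, hi, j, hj, hij⟩ := Finset.one_lt_card.1 hcc
    simp only [Finset.mem_filter] at hi hj
    exact hij (hinj (hi.2.trans hj.2.symm))
  rw [hempty, Set.union_empty]
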